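/- For 1 ≤ k ≤ n and 0 ≤ i ≤ k, in F_q[x_1,…,x_n] one has the recursion c_{k,i} = c_{k−1,i−1}^q + f̃_k · c_{k−1,i}, where by convention c_{k−1,−1} := 0 and c_{k−1,k} := 0. -/

import Mathlib

/-! The terms of `c_{k,i}` are indexed by strictly increasing `j_1 < ⋯ < j_{k-i}` in `{1,…,k}`.
Those with `j_{k-i} < k` are exactly the terms of `c_{k-1,i-1}` raised to the `q`-th power
(raising to the `q`-th power multiplies each exponent `(q-1)q^{t+l-j_l}` by `q`, and it is additive
in characteristic `p`). Those with `j_{k-i} = k` have last factor `f_k^{(q-1)q^0} = f̃_k`, and the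
remaining factors form a term of `c_{k-1,i}`. -/

open MvPolynomial

variable (F : Type) [Field F] [Fintype F] (n : ℕ)

/-- `fP F n k` is the orbit product `f_k` (1-indexed, meaningful for `1 ≤ k ≤ n`)
in `F_q[x_1,…,x_n]`. -/
noncomputable def fP (k : ℕ) : MvPolynomial (Fin n) F :=
  if h : 1 ≤ k ∧ k ≤ n then
    ∏ α : Fin (k - 1) → F,
      (X (⟨k - 1, by omega⟩ : Fin n) +
        ∑ j : Fin (k - 1), C (α j) * X (⟨j.val, by omega⟩ : Fin n))
  else 0

/-- `cP F n s t` is the Dickson-type invariant `c_{s,t}`: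
the sum over strictly increasing sequences `1 ≤ j_1 < ⋯ < j_{s-t} ≤ s` (encoded as
strictly monotone functions `Fin (s-t) → Fin s`) of `∏_l f_{j_l}^{(q-1)·q^{t+l-j_l}}`. -/
noncomputable def cP (s t : ℕ) : MvPolynomial (Fin n) F :=
  if s ≤ n then
    ∑ g ∈ Finset.univ.filter (fun g : Fin (s - t) → Fin s => ∀ a b : Fin (s - t), a < b → g a < g b),
      ∏ l : Fin (s - t),
        fP F n ((g l).val + 1) ^ ((Fintype.card F - 1) * (Fintype.card F) ^ (t + l.val - (g l).val))
  else 0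

open Finset

section StrictMonoSum

def strictMonoMaps (m s : ℕ) : Finset (Fin m → Fin s) :=
  univ.filter fun g => ∀ a b : Fin m, a < b → g a < g b

lemma mem_strictMonoMaps {m s : ℕ} {g : Fin m → Fin s} :
    g ∈ strictMonoMaps m s ↔ StrictMono g := by
  simp [strictMonoMaps, StrictMono]

lemma StrictMono.fin_val_add_le {m s : ℕ} {g : Fin m → Fin s} (hg : StrictMono g) (l : Fin m) :
    (g l : ℕ) + m ≤ s + l := by
  have hcard := card_le_card_of_injOn g (s := Ioi l) (t := Ioi (g l))
    (fun a ha => by simpa using hg (by simpa using ha)) hg.injective.injOn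
  simp only [Fin.card_Ioi] at hcard
  have := (g l).isLt
  omega

lemma strictMono_snoc_castSucc_comp {m s : ℕ} {h : Fin m → Fin s} (hh : StrictMono h) :
    StrictMono (Fin.snoc (Fin.castSucc ∘ h) (Fin.last s) : Fin (m + 1) → Fin (s + 1)) := by
  intro a b hab
  obtain ⟨a, rfl⟩ := a.eq_castSucc_of_ne_last (Fin.ne_last_of_lt hab)
  induction b using Fin.lastCases with
  | last => simp [Fin.castSucc_lt_last]
  | cast b => simpa using hh (Fin.castSucc_lt_castSucc_iff.mp hab)

variable {M : Type*} [AddCommMonoid M]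

lemma sum_strictMonoMaps_filter_ne_last (m s : ℕ) (φ : (Fin (m + 1) → Fin (s + 1)) → M) :
    ∑ g ∈ strictMonoMaps (m + 1) (s + 1) with g (Fin.last m) ≠ Fin.last s, φ g =
      ∑ h ∈ strictMonoMaps (m + 1) s, φ (Fin.castSucc ∘ h) := by
  have ne_last : ∀ g ∈ (strictMonoMaps (m + 1) (s + 1)).filter (· (Fin.last m) ≠ Fin.last s),
      ∀ l, g l ≠ Fin.last s := by
    intro g hg l
    rw [mem_filter, mem_strictMonoMaps] at hg
    exact Fin.ne_last_of_lt ((hg.1.monotone (Fin.le_last l)).trans_lt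
      (Fin.lt_last_iff_ne_last.mpr hg.2))
  symm
  refine sum_bij' (fun h _ => Fin.castSucc ∘ h) (fun g hg l => (g l).castPred (ne_last g hg l))
    (fun h hh => ?_) (fun g hg => ?_) (fun h _ => rfl) (fun g _ => by ext; simp) (fun _ _ => rfl)
  · rw [mem_strictMonoMaps] at hh
    rw [mem_filter, mem_strictMonoMaps]
    exact ⟨Fin.strictMono_castSucc.comp hh, Fin.castSucc_ne_last _⟩
  · have hg' := (mem_strictMonoMaps.mp (mem_filter.mp hg).1)
    exact mem_strictMonoMaps.mpr fun a b hab => Fin.castPred_lt_castPred_iff.mpr (hg' hab)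

lemma sum_strictMonoMaps_filter_eq_last (m s : ℕ) (φ : (Fin (m + 1) → Fin (s + 1)) → M) :
    ∑ g ∈ strictMonoMaps (m + 1) (s + 1) with g (Fin.last m) = Fin.last s, φ g =
      ∑ h ∈ strictMonoMaps m s, φ (Fin.snoc (Fin.castSucc ∘ h) (Fin.last s)) := by
  have ne_last : ∀ g ∈ (strictMonoMaps (m + 1) (s + 1)).filter (· (Fin.last m) = Fin.last s),
      ∀ l : Fin m, g l.castSucc ≠ Fin.last s := by
    intro g hg l
    rw [mem_filter, mem_strictMonoMaps] at hg
    exact hg.2 ▸ (hg.1 (Fin.castSucc_lt_last l)).ne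
  symm
  refine sum_bij' (fun h _ => Fin.snoc (Fin.castSucc ∘ h) (Fin.last s))
    (fun g hg l => (g l.castSucc).castPred (ne_last g hg l))
    (fun h hh => ?_) (fun g hg => ?_) (fun h _ => by ext; simp) (fun g hg => ?_) (fun _ _ => rfl)
  · rw [mem_filter, Fin.snoc_last]
    exact ⟨mem_strictMonoMaps.mpr (strictMono_snoc_castSucc_comp (mem_strictMonoMaps.mp hh)), rfl⟩
  · have hg' := (mem_strictMonoMaps.mp (mem_filter.mp hg).1)
    exact mem_strictMonoMaps.mpr fun a b hab =>
      Fin.castPred_lt_castPred_iff.mpr (hg' (Fin.castSucc_lt_castSucc_iff.mpr hab))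
  · funext l
    induction l using Fin.lastCases with
    | last => simpa using ((mem_filter.mp hg).2).symm
    | cast l => simp

variable {R : Type*} [CommSemiring R]

def strictMonoSum (T : ℕ → ℕ → R) (m s : ℕ) : R :=
  ∑ g ∈ strictMonoMaps m s, ∏ l, T (g l) l

lemma strictMonoSum_zero_left (T : ℕ → ℕ → R) (s : ℕ) : strictMonoSum T 0 s = 1 := by
  simp [strictMonoSum, strictMonoMaps]

lemma strictMonoSum_eq_zero_of_lt (T : ℕ → ℕ → R) {m s : ℕ} (h : s < m) :
    strictMonoSum T m s = 0 := by
  refine sum_eq_zero fun g hg => absurd h (not_lt.mpr ?_)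
  simpa using Fintype.card_le_of_injective g (mem_strictMonoMaps.mp hg).injective

lemma strictMonoSum_succ_succ (T : ℕ → ℕ → R) (m s : ℕ) :
    strictMonoSum T (m + 1) (s + 1) = strictMonoSum T (m + 1) s + T s m * strictMonoSum T m s := by
  simp only [strictMonoSum]
  rw [← sum_filter_not_add_sum_filter _ fun g => g (Fin.last m) = Fin.last s,
    sum_strictMonoMaps_filter_ne_last, sum_strictMonoMaps_filter_eq_last, mul_sum]
  congr 1
  refine sum_congr rfl fun h _ => ?_
  rw [Fin.prod_univ_castSucc, mul_comm]
  simp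

lemma map_strictMonoSum {S : Type*} [CommSemiring S] (φ : R →+* S) (T : ℕ → ℕ → R) (m s : ℕ) :
    φ (strictMonoSum T m s) = strictMonoSum (fun v l => φ (T v l)) m s := by
  simp [strictMonoSum]

lemma strictMonoSum_congr {T T' : ℕ → ℕ → R} {m s : ℕ}
    (h : ∀ v l, v < s → v + m ≤ s + l → T v l = T' v l) :
    strictMonoSum T m s = strictMonoSum T' m s :=
  sum_congr rfl fun g hg => prod_congr rfl fun l _ =>
    h _ _ (g l).isLt ((mem_strictMonoMaps.mp hg).fin_val_add_le l)

end StrictMonoSum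

-- the factor of `c_{s,t}` at the 0-indexed position `l`, where `j_{l+1} = v + 1`
noncomputable def cTerm (t v l : ℕ) : MvPolynomial (Fin n) F :=
  fP F n (v + 1) ^ ((Fintype.card F - 1) * Fintype.card F ^ (t + l - v))

lemma cP_eq_strictMonoSum {s : ℕ} (t : ℕ) (hs : s ≤ n) :
    cP F n s t = strictMonoSum (cTerm F n t) (s - t) s := by
  rw [cP, if_pos hs]
  rfl

lemma cTerm_pow_card {t v l : ℕ} (h : v ≤ t + l) :
    cTerm F n t v l ^ Fintype.card F = cTerm F n (t + 1) v l := by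
  rw [cTerm, cTerm, ← pow_mul, (by omega : t + 1 + l - v = t + l - v + 1), pow_succ, mul_assoc]

lemma cP_pow_card {s : ℕ} (t : ℕ) (hs : s ≤ n) :
    cP F n s t ^ Fintype.card F = strictMonoSum (cTerm F n (t + 1)) (s - t) s := by
  obtain ⟨e, hp, hcard⟩ := FiniteField.card F (ringChar F)
  have : Fact (ringChar F).Prime := ⟨hp⟩
  rw [cP_eq_strictMonoSum F n t hs, hcard, ← iterateFrobenius_def (ringChar F) e,
    map_strictMonoSum]
  -- `t + l - v` is a truncated subtraction: the identity of exponents needs `v ≤ t + l`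
  refine strictMonoSum_congr fun v l hv hvl => ?_
  rw [iterateFrobenius_def, ← hcard, cTerm_pow_card]
  omega

theorem c_recursion (k i : ℕ) (hk1 : 1 ≤ k) (hk2 : k ≤ n) (hi : i ≤ k) :
    cP F n k i =
      (if i = 0 then 0 else cP F n (k - 1) (i - 1)) ^ (Fintype.card F) +
        fP F n k ^ (Fintype.card F - 1) * (if i = k then 0 else cP F n (k - 1) i) := by
  obtain ⟨s, rfl⟩ : ∃ s, k = s + 1 := ⟨k - 1, by omega⟩
  rw [Nat.add_sub_cancel]
  obtain rfl | hik := eq_or_lt_of_le hi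
  · simp [cP_eq_strictMonoSum F n _ hk2, cP_eq_strictMonoSum F n s (by omega : s ≤ n),
      strictMonoSum_zero_left]
  obtain ⟨m, hm⟩ : ∃ m, s + 1 - i = m + 1 := ⟨s - i, by omega⟩
  rw [cP_eq_strictMonoSum F n i hk2, hm, strictMonoSum_succ_succ, if_neg hik.ne,
    cP_eq_strictMonoSum F n i (by omega : s ≤ n), (by omega : s - i = m), cTerm,
    (by omega : i + m - s = 0), pow_zero, mul_one]
  congr 1
  rcases i with _ | t
  · rw [if_pos rfl, zero_pow Fintype.card_ne_zero, strictMonoSum_eq_zero_of_lt _ (by omega)]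
  · rw [if_neg (Nat.succ_ne_zero t), Nat.add_sub_cancel, cP_pow_card F n t (by omega),
      (by omega : s - t = m + 1)]
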